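/- Let d ≥ 3 be an integer, G = (V,E) a finite d-claw free graph, w : V → ℝ positive, A* an independent set of maximum weight, and A an independent set admitting no local improvement of w²(A) (in particular A is maximal, so charges are defined). With ε := 1/5308416, δ := 1/6 and B̄ := {v ∈ A : ∑_{u∈T_v} charge(u,v) > ((1−ε)/2)·w(v)}, if w(B̄) ≤ (1−δ)·w(A), then w(A*) ≤ ((d−εδ)/2)·w(A). -/

import Mathlib

open Finset

open scoped Classical

variable {V : Type*}

noncomputable section

/-- Neighborhood of `U` in `W`: vertices of `W` that lie in `U` or are adjacent to some
vertex of `U`. -/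
def nbhd (G : SimpleGraph V) (U W : Finset V) : Finset V :=
  W.filter (fun x => x ∈ U ∨ ∃ u ∈ U, G.Adj u x)

/-- Neighborhood of a single vertex `u` in `W`. -/
def nbhd1 (G : SimpleGraph V) (u : V) (W : Finset V) : Finset V :=
  nbhd G {u} W

/-- Total weight of a finite set of vertices. -/
def wsum (w : V → ℝ) (U : Finset V) : ℝ := ∑ x ∈ U, w x

/-- Total squared weight of a finite set of vertices. -/
def wsq (w : V → ℝ) (U : Finset V) : ℝ := ∑ x ∈ U, (w x) ^ 2

/-- A finite set of vertices is independent. -/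
def IsIndep (G : SimpleGraph V) (S : Finset V) : Prop :=
  ∀ a ∈ S, ∀ b ∈ S, a ≠ b → ¬ G.Adj a b

/-- `G` is `d`-claw free: every independent subset of the neighborhood of any vertex has
size at most `d - 1`. -/
def ClawFree (G : SimpleGraph V) (d : ℕ) : Prop :=
  ∀ v : V, ∀ S : Finset V, (∀ x ∈ S, G.Adj v x) → IsIndep G S → S.card ≤ d - 1

/-- `X` is a local improvement of `w²(A)`. -/
def LocalImprovement (G : SimpleGraph V) (d : ℕ) (w : V → ℝ) (A X : Finset V) : Prop :=
  IsIndep G X ∧ X.card ≤ (d - 1) ^ 2 + (d - 1) ∧ wsq w (nbhd G X A) < wsq w X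

/-- No claw improves `w²(A)`: `w²(T) ≤ w²(N(T,A))` for every independent set `T` that is a
singleton or whose vertices are all adjacent to a common vertex. -/
def NoClawImproves (G : SimpleGraph V) (w : V → ℝ) (A : Finset V) : Prop :=
  ∀ T : Finset V, IsIndep G T → (T.card = 1 ∨ ∃ v : V, ∀ x ∈ T, G.Adj v x) →
    wsq w T ≤ wsq w (nbhd G T A)

/-- The charge map, relative to a choice `n` of heaviest neighbors. -/
def charge (G : SimpleGraph V) (w : V → ℝ) (A : Finset V) (n : V → V) (u v : V) : ℝ :=
  if v = n u then w u - wsum w (nbhd1 G u A) / 2 else 0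

/-- `u ∈ T_v` is single (with `√ε = 1/2304`). -/
def IsSingle (G : SimpleGraph V) (w : V → ℝ) (A : Finset V) (u v : V) : Prop :=
  (1 - 1 / 2304 : ℝ) ≤ w u / w v ∧ w u / w v ≤ 1 + 1 / 2304 ∧
  wsum w (nbhd1 G u A) ≤ (1 + 1 / 2304) * w v

/-- `u ∈ T_v` is double (with `√ε = 1/2304`). -/
def IsDouble (G : SimpleGraph V) (w : V → ℝ) (A : Finset V) (u v : V) : Prop :=
  2 ≤ (nbhd1 G u A).card ∧
  ∃ v₂ ∈ (nbhd1 G u A).erase v, (∀ x ∈ (nbhd1 G u A).erase v, w x ≤ w v₂) ∧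
    (1 - 1 / 2304 : ℝ) ≤ w u / w v ∧ w u / w v ≤ 1 + 1 / 2304 ∧
    (1 - 1 / 2304 : ℝ) ≤ w v₂ / w v ∧ w v₂ / w v ≤ 1 ∧
    (2 - 1 / 2304) * w v ≤ wsum w (nbhd1 G u A) ∧ wsum w (nbhd1 G u A) < 2 * w u

/-- The contribution map. -/
def contr (G : SimpleGraph V) (w : V → ℝ) (A : Finset V) (u v : V) : ℝ :=
  if v ∈ nbhd1 G u A then max 0 (((w u) ^ 2 - wsq w ((nbhd1 G u A).erase v)) / w v) else 0

/-!
Every `u ∈ A*` pays half the weight of its neighborhood `N(u,A)` plus its charge, which it sends to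
its heaviest neighbor `n(u)`. By claw-freeness each `x ∈ A` lies in at most `d - 1` of the sets
`N(u,A)`, so the first parts sum to at most `(d-1)/2 · w(A)`. The vertices of `T_v` form a claw
centred at `v`, so by local optimality of `w²(A)` (an AM–GM estimate per vertex) the charge received
by any `v ∈ A` is at most `w(v)/2`; outside `B̄` it is at most `(1-ε)/2 · w(v)`, which saves
`εδ/2 · w(A)` once `B̄` misses a `δ`-fraction of the weight.
-/

section

variable {G : SimpleGraph V} {w : V → ℝ} {A : Finset V}

@[simp]
lemma mem_nbhd {U : Finset V} {x : V} :
    x ∈ nbhd G U A ↔ x ∈ A ∧ (x ∈ U ∨ ∃ u ∈ U, G.Adj u x) := by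
  simp [nbhd]

@[simp]
lemma mem_nbhd1 {u x : V} : x ∈ nbhd1 G u A ↔ x ∈ A ∧ (x = u ∨ G.Adj u x) := by
  simp [nbhd1, nbhd]

lemma wsq_mono {S T : Finset V} (h : S ⊆ T) : wsq w S ≤ wsq w T :=
  sum_le_sum_of_subset_of_nonneg h fun _ _ _ => sq_nonneg _

lemma wsq_union_le (S T : Finset V) : wsq w (S ∪ T) ≤ wsq w S + wsq w T := by
  have hinter : 0 ≤ wsq w (S ∩ T) := sum_nonneg fun _ _ => sq_nonneg _
  have := sum_union_inter (s₁ := S) (s₂ := T) (f := fun x => w x ^ 2)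
  simp only [wsq] at hinter ⊢
  linarith

lemma wsq_biUnion_le {ι : Type*} (T : Finset ι) (f : ι → Finset V) :
    wsq w (T.biUnion f) ≤ ∑ i ∈ T, wsq w (f i) := by
  rw [← sup_eq_biUnion]
  exact T.apply_sup_le_sum rfl (wsq_union_le _ _)

lemma wsq_le_mul_wsum {U : Finset V} {c : ℝ} (h : ∀ x ∈ U, 0 ≤ w x ∧ w x ≤ c) :
    wsq w U ≤ c * wsum w U := by
  rw [wsq, wsum, mul_sum]
  refine sum_le_sum fun x hx => ?_
  obtain ⟨h₀, hc⟩ := h x hx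
  nlinarith

lemma IsIndep.card_eq_one_or_forall_adj {T : Finset V} (hT : IsIndep G T) {v : V}
    (hv : ∀ u ∈ T, v = u ∨ G.Adj u v) : T.card = 1 ∨ ∃ c, ∀ x ∈ T, G.Adj c x := by
  by_cases hvT : v ∈ T
  · refine Or.inl (card_eq_one.2 ⟨v, eq_singleton_iff_unique_mem.2 ⟨hvT, fun u hu => ?_⟩⟩)
    exact ((hv u hu).resolve_right fun h => hT u hu v hvT h.ne h).symm
  · exact Or.inr ⟨v, fun x hx => ((hv x hx).resolve_left fun h => hvT (h ▸ hx)).symm⟩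

lemma noClawImproves_of_forall_not_localImprovement {d : ℕ} (hG : ClawFree G d) (hd : 2 ≤ d)
    (hA : ∀ X, ¬ LocalImprovement G d w A X) : NoClawImproves G w A := by
  intro T hT hclaw
  have hcard : T.card ≤ d - 1 := by
    rcases hclaw with h | ⟨c, hc⟩
    · omega
    · exact hG c T hc hT
  have : d - 1 ≤ (d - 1) ^ 2 + (d - 1) := Nat.le_add_left _ _
  exact not_lt.1 fun h => hA T ⟨hT, hcard.trans this, h⟩

lemma card_filter_closedNeighbor_add_one_le {d : ℕ} (hG : ClawFree G d) (hd : 2 ≤ d)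
    {S : Finset V} (hS : IsIndep G S) (x : V) :
    (S.filter fun u => x = u ∨ G.Adj u x).card + 1 ≤ d := by
  by_cases hxS : x ∈ S
  · have hsub : S.filter (fun u => x = u ∨ G.Adj u x) ⊆ {x} := by
      intro u hu
      obtain ⟨huS, hxu | hux⟩ := mem_filter.1 hu
      · exact mem_singleton.2 hxu.symm
      · exact absurd hux (hS u huS x hxS hux.ne)
    have := card_le_card hsub
    rw [card_singleton] at this
    omega
  · have hadj : ∀ u ∈ S.filter (fun u => x = u ∨ G.Adj u x), G.Adj x u := by
      intro u hu
      obtain ⟨huS, hxu | hux⟩ := mem_filter.1 hu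
      · exact absurd (hxu ▸ huS) hxS
      · exact hux.symm
    have := hG x _ hadj fun a ha b hb => hS a (mem_filter.1 ha).1 b (mem_filter.1 hb).1
    omega

lemma sum_wsum_nbhd1_le {d : ℕ} (hG : ClawFree G d) (hd : 2 ≤ d) (hw : ∀ x, 0 ≤ w x)
    {S : Finset V} (hS : IsIndep G S) :
    ∑ u ∈ S, wsum w (nbhd1 G u A) ≤ ((d : ℝ) - 1) * wsum w A := by
  calc ∑ u ∈ S, wsum w (nbhd1 G u A)
      = ∑ x ∈ A, ((S.filter fun u => x = u ∨ G.Adj u x).card : ℝ) * w x := by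
        simp only [wsum, nbhd1, nbhd, sum_filter]
        rw [sum_comm]
        refine sum_congr rfl fun x _ => ?_
        rw [← sum_filter, sum_const, nsmul_eq_mul]
        simp
    _ ≤ ∑ x ∈ A, ((d : ℝ) - 1) * w x := by
        refine sum_le_sum fun x _ => mul_le_mul_of_nonneg_right ?_ (hw x)
        have hcard : ((S.filter fun u => x = u ∨ G.Adj u x).card : ℝ) + 1 ≤ d := by
          exact_mod_cast card_filter_closedNeighbor_add_one_le hG hd hS x
        linarith
    _ = ((d : ℝ) - 1) * wsum w A := (mul_sum _ _ _).symm

lemma wsq_nbhd_le (T : Finset V) (v : V) :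
    wsq w (nbhd G T A) ≤ w v ^ 2 + ∑ u ∈ T, wsq w ((nbhd1 G u A).erase v) := by
  have hcover : nbhd G T A ⊆ {v} ∪ T.biUnion fun u => (nbhd1 G u A).erase v := by
    intro x hx
    obtain ⟨hxA, hx⟩ := mem_nbhd.1 hx
    rw [mem_union, mem_singleton, mem_biUnion]
    by_cases hxv : x = v
    · exact Or.inl hxv
    rcases hx with hxT | ⟨u, huT, hux⟩
    · exact Or.inr ⟨x, hxT, mem_erase.2 ⟨hxv, mem_nbhd1.2 ⟨hxA, Or.inl rfl⟩⟩⟩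
    · exact Or.inr ⟨u, huT, mem_erase.2 ⟨hxv, mem_nbhd1.2 ⟨hxA, Or.inr hux⟩⟩⟩
  calc wsq w (nbhd G T A)
      ≤ wsq w {v} + wsq w (T.biUnion fun u => (nbhd1 G u A).erase v) :=
        (wsq_mono hcover).trans (wsq_union_le _ _)
    _ ≤ w v ^ 2 + ∑ u ∈ T, wsq w ((nbhd1 G u A).erase v) := by
        rw [wsq, sum_singleton]
        exact add_le_add le_rfl (wsq_biUnion_le _ _)

lemma charge_le {n : V → V} (hw : ∀ x, 0 < w x) {u v : V} (hvu : v = n u)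
    (hv : v ∈ nbhd1 G u A) (hmax : ∀ x ∈ nbhd1 G u A, w x ≤ w v) :
    charge G w A n u v ≤ (w u ^ 2 - wsq w ((nbhd1 G u A).erase v)) / (2 * w v) := by
  have hsplit : wsum w (nbhd1 G u A) = w v + wsum w ((nbhd1 G u A).erase v) :=
    (add_sum_erase _ _ hv).symm
  have hrest : wsq w ((nbhd1 G u A).erase v) ≤ w v * wsum w ((nbhd1 G u A).erase v) :=
    wsq_le_mul_wsum fun x hx => ⟨(hw x).le, hmax x (mem_of_mem_erase hx)⟩
  have hwv := hw v
  rw [charge, if_pos hvu, hsplit, le_div_iff₀ (by positivity)]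
  -- AM–GM: `2 w(u) w(v) ≤ w(u)² + w(v)²`
  nlinarith [sq_nonneg (w u - w v)]

/-- The total charge `∑_{u ∈ T_v} charge(u,v)` received by `v` from `S`. -/
def receivedCharge (G : SimpleGraph V) (w : V → ℝ) (A : Finset V) (n : V → V) (S : Finset V)
    (v : V) : ℝ :=
  ∑ u ∈ S.filter (fun u => 0 < charge G w A n u v), charge G w A n u v

lemma receivedCharge_le_half {n : V → V} {S : Finset V} (hw : ∀ x, 0 < w x)
    (hA : NoClawImproves G w A) (hS : IsIndep G S)
    (hn : ∀ u ∈ S, n u ∈ nbhd1 G u A ∧ ∀ x ∈ nbhd1 G u A, w x ≤ w (n u)) (v : V) :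
    receivedCharge G w A n S v ≤ w v / 2 := by
  set T := S.filter fun u => 0 < charge G w A n u v
  have hT : ∀ u ∈ T, u ∈ S ∧ v = n u := by
    intro u hu
    obtain ⟨huS, hpos⟩ := mem_filter.1 hu
    refine ⟨huS, by_contra fun h => ?_⟩
    simp [charge, h] at hpos
  have hvN : ∀ u ∈ T, v ∈ nbhd1 G u A := fun u hu => (hT u hu).2 ▸ (hn u (hT u hu).1).1
  have hTindep : IsIndep G T := fun a ha b hb => hS a (hT a ha).1 b (hT b hb).1
  have hclaw : wsq w T ≤ wsq w (nbhd G T A) :=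
    hA T hTindep (hTindep.card_eq_one_or_forall_adj fun u hu => (mem_nbhd1.1 (hvN u hu)).2)
  have hwv := hw v
  calc receivedCharge G w A n S v
      ≤ ∑ u ∈ T, (w u ^ 2 - wsq w ((nbhd1 G u A).erase v)) / (2 * w v) :=
        sum_le_sum fun u hu =>
          charge_le hw (hT u hu).2 (hvN u hu) ((hT u hu).2 ▸ (hn u (hT u hu).1).2)
    _ = (wsq w T - ∑ u ∈ T, wsq w ((nbhd1 G u A).erase v)) / (2 * w v) := by
        rw [← sum_div, sum_sub_distrib]
        rfl
    _ ≤ w v / 2 := by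
        rw [div_le_iff₀ (by positivity)]
        nlinarith [wsq_nbhd_le (G := G) (w := w) (A := A) T v]

lemma wsum_eq_half_sum_wsum_nbhd1_add_sum_charge (n : V → V) (S : Finset V) :
    wsum w S = (∑ u ∈ S, wsum w (nbhd1 G u A)) / 2 + ∑ u ∈ S, charge G w A n u (n u) := by
  rw [wsum, sum_div, ← sum_add_distrib]
  refine sum_congr rfl fun u _ => ?_
  rw [charge, if_pos rfl]
  ring

lemma sum_charge_le_sum_receivedCharge {n : V → V} {S : Finset V} (hn : ∀ u ∈ S, n u ∈ A) :
    ∑ u ∈ S, charge G w A n u (n u) ≤ ∑ v ∈ A, receivedCharge G w A n S v := by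
  simp only [receivedCharge, sum_filter]
  rw [sum_comm]
  refine sum_le_sum fun u hu => ?_
  calc charge G w A n u (n u)
      ≤ if 0 < charge G w A n u (n u) then charge G w A n u (n u) else 0 := by
        split_ifs with h
        exacts [le_rfl, not_lt.1 h]
    _ ≤ ∑ v ∈ A, if 0 < charge G w A n u v then charge G w A n u v else 0 :=
        single_le_sum (f := fun v => if 0 < charge G w A n u v then charge G w A n u v else 0)
          (fun v _ => by split_ifs with h <;> [exact h.le; exact le_rfl]) (hn u hu)

end

lemma sum_le_of_wsum_filter_le {w f : V → ℝ} {A : Finset V} {ε δ : ℝ} (hε : 0 ≤ ε)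
    (hf : ∀ v ∈ A, f v ≤ w v / 2)
    (hB : wsum w (A.filter fun v => (1 - ε) / 2 * w v < f v) ≤ (1 - δ) * wsum w A) :
    ∑ v ∈ A, f v ≤ (1 - ε * δ) / 2 * wsum w A := by
  have hsplit := sum_filter_add_sum_filter_not A (fun v => (1 - ε) / 2 * w v < f v) w
  have hheavy : ∑ v ∈ A.filter (fun v => (1 - ε) / 2 * w v < f v), f v
      ≤ ∑ v ∈ A.filter (fun v => (1 - ε) / 2 * w v < f v), w v / 2 :=
    sum_le_sum fun v hv => hf v (mem_filter.1 hv).1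
  have hlight : ∑ v ∈ A.filter (fun v => ¬ (1 - ε) / 2 * w v < f v), f v
      ≤ ∑ v ∈ A.filter (fun v => ¬ (1 - ε) / 2 * w v < f v), (1 - ε) / 2 * w v :=
    sum_le_sum fun v hv => not_lt.1 (mem_filter.1 hv).2
  rw [← sum_div] at hheavy
  rw [← mul_sum] at hlight
  rw [← sum_filter_add_sum_filter_not A (fun v => (1 - ε) / 2 * w v < f v) f]
  simp only [wsum] at hB ⊢
  nlinarith [mul_le_mul_of_nonneg_left hB hε]

theorem stmt15_general (G : SimpleGraph V) (d : ℕ) (hd : 3 ≤ d) (hG : ClawFree G d)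
    (w : V → ℝ) (hw : ∀ v, 0 < w v) (Astar A : Finset V)
    (hAstarIndep : IsIndep G Astar)
    (hNoImp : ∀ X : Finset V, ¬ LocalImprovement G d w A X)
    (n : V → V)
    (hn : ∀ u ∈ Astar, n u ∈ nbhd1 G u A ∧ ∀ x ∈ nbhd1 G u A, w x ≤ w (n u))
    (Bbar : Finset V)
    (hBbar : Bbar = A.filter (fun v =>
        (1 - 1 / 5308416 : ℝ) / 2 * w v
            < ∑ u ∈ Astar.filter (fun u => 0 < charge G w A n u v), charge G w A n u v))
    (hwBbar : wsum w Bbar ≤ (1 - 1 / 6 : ℝ) * wsum w A) :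
    wsum w Astar ≤ ((d : ℝ) - 1 / 5308416 * (1 / 6)) / 2 * wsum w A := by
  have hNoClaw := noClawImproves_of_forall_not_localImprovement hG (by omega) hNoImp
  have hnbhd : ∑ u ∈ Astar, wsum w (nbhd1 G u A) ≤ ((d : ℝ) - 1) * wsum w A :=
    sum_wsum_nbhd1_le hG (by omega) (fun x => (hw x).le) hAstarIndep
  have hcharge : ∑ u ∈ Astar, charge G w A n u (n u)
      ≤ (1 - 1 / 5308416 * (1 / 6)) / 2 * wsum w A := by
    refine (sum_charge_le_sum_receivedCharge fun u hu => (mem_nbhd1.1 (hn u hu).1).1).trans ?_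
    subst hBbar
    exact sum_le_of_wsum_filter_le (by norm_num)
      (fun v _ => receivedCharge_le_half hw hNoClaw hAstarIndep hn v) hwBbar
  rw [wsum_eq_half_sum_wsum_nbhd1_add_sum_charge (G := G) (A := A) n Astar]
  linarith

theorem stmt15 [Fintype V] (G : SimpleGraph V) (d : ℕ) (hd : 3 ≤ d) (hG : ClawFree G d)
    (w : V → ℝ) (hw : ∀ v, 0 < w v) (Astar A : Finset V)
    (hAstarIndep : IsIndep G Astar)
    (hAstarMax : ∀ S : Finset V, IsIndep G S → wsum w S ≤ wsum w Astar)
    (hAIndep : IsIndep G A) (hAmax : ∀ v : V, (nbhd1 G v A).Nonempty)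
    (hNoImp : ∀ X : Finset V, ¬ LocalImprovement G d w A X)
    (n : V → V)
    (hn : ∀ u ∈ Astar, n u ∈ nbhd1 G u A ∧ ∀ x ∈ nbhd1 G u A, w x ≤ w (n u))
    (Bbar : Finset V)
    (hBbar : Bbar = A.filter (fun v =>
        (1 - 1 / 5308416 : ℝ) / 2 * w v
            < ∑ u ∈ Astar.filter (fun u => 0 < charge G w A n u v), charge G w A n u v))
    (hwBbar : wsum w Bbar ≤ (1 - 1 / 6 : ℝ) * wsum w A) :
    wsum w Astar ≤ ((d : ℝ) - 1 / 5308416 * (1 / 6)) / 2 * wsum w A :=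
  stmt15_general G d hd hG w hw Astar A hAstarIndep hNoImp n hn Bbar hBbar hwBbar

end
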